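/- arXiv:2312.15342 — 4 statements merged into one kernel-verified Lean document; each statement's English description precedes it below -/
import Mathlib

section
/- Let m ≥ 1, Γ̂ a nondegenerate compact interval, and β⁺, β⁻ > 0 constants. For a piecewise polynomial φ = φ⁻ χ_{η<0} + φ⁺ χ_{η≥0} with φ^± ∈ Q^m (tensor-product polynomials of degree ≤ m in η and ξ), satisfying the weak jump conditions ∫_Γ̂ (φ⁺(0,ξ) − φ⁻(0,ξ)) v dξ = 0, ∫_Γ̂ (β⁺ φ_η⁺(0,ξ) − β⁻ φ_η⁻(0,ξ)) v dξ = 0 for all v ∈ P^m(Γ̂), together with the weak jump conditions on ∂^j_η L(φ) for j = 0,…,m−2 (where L is the Laplacian operator in Frenet coordinates), the following holds: given φ⁻ ∈ Q^m there exists a unique φ⁺ ∈ Q^m such that φ satisfies all these conditions. Equivalently, if φ⁻ = 0 then φ⁺ = 0. -/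
open MeasureTheory

noncomputable section

/-- The transformed Laplacian operator in Frenet coordinates. -/
def Lop (J0 J1 J2 : ℝ → ℝ → ℝ) (f : ℝ → ℝ → ℝ) (η ξ : ℝ) : ℝ :=
  iteratedDeriv 2 (fun t => f t ξ) η + J0 η ξ * iteratedDeriv 2 (fun s => f η s) ξ +
    J1 η ξ * deriv (fun t => f t ξ) η + J2 η ξ * deriv (fun s => f η s) ξ

/-- Evaluation of a tensor-product `Q^m` polynomial given by its coefficients. -/
def QEval (m : ℕ) (c : Fin (m + 1) → Fin (m + 1) → ℝ) (η ξ : ℝ) : ℝ :=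
  ∑ i : Fin (m + 1), ∑ j : Fin (m + 1), c i j * η ^ (i : ℕ) * ξ ^ (j : ℕ)

/-!
The `n`-th jump condition (`n = 0, …, m`) asks that `β⁺ Tₙφ⁺ − β⁻ Tₙφ⁻` be orthogonal to
`P^m(Γ̂)`, where `T₀φ = φ(0,·)`, `T₁φ = ∂_η φ(0,·)` and `T_{j+2}φ = ∂_η^j L(φ)(0,·)`. The moments
`∫ Tₙφ · ξ^k` define a linear endomorphism of the `(m+1)²`-dimensional space `Q^m`, so existence
and uniqueness both reduce to its injectivity.

The map is triangular in the `η`-degree. The coefficients `Jᵢ` are smooth in `η` near the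
interface, and every term of `L(η^i ξ^l)` carrying a `Jᵢ` keeps a factor `η^(i-1)`; so for
`i ≥ j + 2` only `∂_η²` survives in `T_{j+2}(η^i ξ^l)`, which is `(j+2)! ξ^l` if `i = j + 2` and
`0` otherwise. If all moments of `φ` vanish, its `η`-coefficients therefore vanish one after the
other, each being a polynomial of degree `≤ m` orthogonal to `P^m` on an interval.
The geometry of the interface only enters through the continuity in `ξ` of the `η`-derivatives
of the `Jᵢ` at `η = 0`, which makes all the moments genuine integrals.
-/

open Polynomial
open scoped ContDiff

lemma iteratedDeriv_mul_pow_eq_zero {𝕜 : Type*} [NontriviallyNormedField 𝕜] {f : 𝕜 → 𝕜}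
    {n p : ℕ} (hf : ContDiffAt 𝕜 n f 0) (hnp : n < p) :
    iteratedDeriv n (fun t => f t * t ^ p) 0 = 0 := by
  rw [iteratedDeriv_fun_mul hf (by fun_prop)]
  refine Finset.sum_eq_zero fun i _ => ?_
  rw [iteratedDeriv_fun_pow_zero, if_neg (by omega), Nat.cast_zero, mul_zero]

lemma iteratedDeriv_inv_one_add_mul_zero {𝕜 : Type*} [NontriviallyNormedField 𝕜] (a : 𝕜)
    (k : ℕ) : iteratedDeriv k (fun t => (1 + t * a)⁻¹) 0 = (-1) ^ k * k.factorial * a ^ k := by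
  have h : (fun t => (1 + t * a)⁻¹) = fun t => (a * t + 1)⁻¹ := by
    ext t
    ring_nf
  rw [h, iteratedDeriv_eq_iterate, iter_deriv_inv_linear]
  simp

structure HasContinuousNormalJet (F : ℝ → ℝ → ℝ) : Prop where
  contDiffAt : ∀ ξ, ContDiffAt ℝ ∞ (fun η => F η ξ) 0
  continuous_iteratedDeriv : ∀ k, Continuous fun ξ => iteratedDeriv k (fun η => F η ξ) 0

namespace HasContinuousNormalJet

variable {F G : ℝ → ℝ → ℝ}

lemma contDiffAt_nat (hF : HasContinuousNormalJet F) (n : ℕ) (ξ : ℝ) :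
    ContDiffAt ℝ n (fun η => F η ξ) 0 :=
  (hF.contDiffAt ξ).of_le (by exact_mod_cast le_top)

lemma const {f : ℝ → ℝ} (hf : Continuous f) : HasContinuousNormalJet fun _ ξ => f ξ where
  contDiffAt _ := contDiffAt_const
  continuous_iteratedDeriv k := by
    simp only [iteratedDeriv_const]
    split_ifs
    exacts [hf, continuous_const]

lemma normal : HasContinuousNormalJet fun η _ => η where
  contDiffAt _ := contDiffAt_id
  continuous_iteratedDeriv k := by
    simp only [iteratedDeriv_fun_id_zero]
    exact continuous_const

lemma add (hF : HasContinuousNormalJet F) (hG : HasContinuousNormalJet G) :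
    HasContinuousNormalJet fun η ξ => F η ξ + G η ξ where
  contDiffAt ξ := (hF.contDiffAt ξ).add (hG.contDiffAt ξ)
  continuous_iteratedDeriv k := by
    simp only [fun ξ => iteratedDeriv_fun_add (hF.contDiffAt_nat k ξ) (hG.contDiffAt_nat k ξ)]
    exact (hF.continuous_iteratedDeriv k).add (hG.continuous_iteratedDeriv k)

lemma mul (hF : HasContinuousNormalJet F) (hG : HasContinuousNormalJet G) :
    HasContinuousNormalJet fun η ξ => F η ξ * G η ξ where
  contDiffAt ξ := (hF.contDiffAt ξ).mul (hG.contDiffAt ξ)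
  continuous_iteratedDeriv k := by
    simp only [fun ξ => iteratedDeriv_fun_mul (hF.contDiffAt_nat k ξ) (hG.contDiffAt_nat k ξ)]
    exact continuous_finsetSum _ fun i _ =>
      (continuous_const.mul (hF.continuous_iteratedDeriv i)).mul (hG.continuous_iteratedDeriv _)

lemma neg (hF : HasContinuousNormalJet F) : HasContinuousNormalJet fun η ξ => -F η ξ := by
  simpa using (const continuous_const (f := fun _ => -1)).mul hF

lemma pow (hF : HasContinuousNormalJet F) (n : ℕ) :
    HasContinuousNormalJet fun η ξ => F η ξ ^ n := by
  induction n with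
  | zero => simpa using const continuous_const
  | succ n ih => simpa only [pow_succ] using ih.mul hF

lemma inv_one_add_mul {κ : ℝ → ℝ} (hκ : Continuous κ) :
    HasContinuousNormalJet fun η ξ => (1 + η * κ ξ)⁻¹ where
  contDiffAt ξ := (contDiffAt_const.add (contDiffAt_id.mul contDiffAt_const)).inv (by simp)
  continuous_iteratedDeriv k := by
    simp only [iteratedDeriv_inv_one_add_mul_zero]
    fun_prop

end HasContinuousNormalJet

section

variable (J0 J1 J2 : ℝ → ℝ → ℝ)

lemma Lop_monomial (i l : ℕ) (η ξ : ℝ) :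
    Lop J0 J1 J2 (fun η ξ => η ^ i * ξ ^ l) η ξ =
      η ^ (i - 2) * (i.descFactorial 2 * ξ ^ l) +
        J0 η ξ * (η ^ i * (l.descFactorial 2 * ξ ^ (l - 2))) +
        J1 η ξ * (η ^ (i - 1) * (i * ξ ^ l)) + J2 η ξ * (η ^ i * (l * ξ ^ (l - 1))) := by
  simp only [Lop, iteratedDeriv_mul_const_field, iteratedDeriv_const_mul_field, iteratedDeriv_pow,
    deriv_mul_const_field', deriv_const_mul_field', deriv_pow_field]
  ring

lemma Lop_QEval (m : ℕ) (c : Fin (m + 1) → Fin (m + 1) → ℝ) (η ξ : ℝ) :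
    Lop J0 J1 J2 (QEval m c) η ξ =
      ∑ i : Fin (m + 1), ∑ l : Fin (m + 1),
        c i l * Lop J0 J1 J2 (fun η ξ => η ^ (i : ℕ) * ξ ^ (l : ℕ)) η ξ := by
  simp only [Lop, QEval, mul_assoc]
  simp (disch := fun_prop) only [iteratedDeriv_fun_sum, deriv_fun_sum,
    iteratedDeriv_const_mul_field, deriv_const_mul_field', Finset.mul_sum,
    ← Finset.sum_add_distrib]
  refine Finset.sum_congr rfl fun i _ => Finset.sum_congr rfl fun l _ => ?_
  ring

/-- The quantity whose weighted jump across `η = 0` enters the `n`-th interface condition. -/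
def interfaceTrace (f : ℝ → ℝ → ℝ) : ℕ → ℝ → ℝ
  | 0, ξ => f 0 ξ
  | 1, ξ => deriv (fun η => f η ξ) 0
  | j + 2, ξ => iteratedDeriv j (fun η => Lop J0 J1 J2 f η ξ) 0

end

section

variable {J0 J1 J2 : ℝ → ℝ → ℝ}

lemma interfaceTrace_monomial_of_le (hJ0 : ∀ ξ, ContDiffAt ℝ ∞ (fun η => J0 η ξ) 0)
    (hJ1 : ∀ ξ, ContDiffAt ℝ ∞ (fun η => J1 η ξ) 0)
    (hJ2 : ∀ ξ, ContDiffAt ℝ ∞ (fun η => J2 η ξ) 0) {n i : ℕ} (l : ℕ) (hni : n ≤ i) (ξ : ℝ) :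
    interfaceTrace J0 J1 J2 (fun η ξ => η ^ i * ξ ^ l) n ξ =
      if i = n then n.factorial * ξ ^ l else 0 := by
  match n, hni with
  | 0, _ => by_cases h : i = 0 <;> simp [interfaceTrace, h]
  | 1, hi =>
    obtain ⟨i, rfl⟩ := Nat.exists_eq_add_of_le hi
    by_cases h : i = 0 <;> simp [interfaceTrace, h]
  | j + 2, hi =>
    obtain ⟨i, rfl⟩ := Nat.exists_eq_add_of_le hi
    set W := fun η => J0 η ξ * η * (l.descFactorial 2 * ξ ^ (l - 2)) +
      J1 η ξ * ((j + 2 + i : ℕ) * ξ ^ l) + J2 η ξ * η * (l * ξ ^ (l - 1))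
    have hsplit : (fun η => Lop J0 J1 J2 (fun η ξ => η ^ (j + 2 + i) * ξ ^ l) η ξ) =
        fun η => ((j + 2 + i).descFactorial 2 * ξ ^ l) * η ^ (j + i) + W η * η ^ (j + i + 1) := by
      ext η
      rw [Lop_monomial, show j + 2 + i - 2 = j + i by omega,
        show j + 2 + i - 1 = j + i + 1 by omega]
      ring
    have hW : ContDiffAt ℝ j W 0 := by
      have h0 := (hJ0 ξ).of_le (m := j) (by exact_mod_cast le_top)
      have h1 := (hJ1 ξ).of_le (m := j) (by exact_mod_cast le_top)
      have h2 := (hJ2 ξ).of_le (m := j) (by exact_mod_cast le_top)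
      fun_prop
    rw [interfaceTrace, hsplit, iteratedDeriv_fun_add (by fun_prop) (by fun_prop),
      iteratedDeriv_const_mul_field, iteratedDeriv_fun_pow_zero,
      iteratedDeriv_mul_pow_eq_zero hW (by omega)]
    rcases Nat.eq_zero_or_pos i with rfl | hi
    · simp only [add_zero, if_pos, ← Nat.factorial_mul_descFactorial (show 2 ≤ j + 2 by omega),
        Nat.add_sub_cancel, Nat.cast_mul]
      ring
    · simp [hi.ne']

lemma hasContinuousNormalJet_Lop_monomial (hJ0 : HasContinuousNormalJet J0)
    (hJ1 : HasContinuousNormalJet J1) (hJ2 : HasContinuousNormalJet J2) (i l : ℕ) :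
    HasContinuousNormalJet (Lop J0 J1 J2 fun η ξ => η ^ i * ξ ^ l) := by
  have hpoly (p : ℕ) {f : ℝ → ℝ} (hf : Continuous f) :
      HasContinuousNormalJet fun η ξ => η ^ p * f ξ :=
    (HasContinuousNormalJet.normal.pow p).mul (.const hf)
  simp only [funext₂ (Lop_monomial J0 J1 J2 i l)]
  exact (((hpoly _ (by fun_prop)).add (hJ0.mul (hpoly _ (by fun_prop)))).add
    (hJ1.mul (hpoly _ (by fun_prop)))).add (hJ2.mul (hpoly _ (by fun_prop)))

lemma continuous_interfaceTrace {f : ℝ → ℝ → ℝ} (hf : HasContinuousNormalJet f)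
    (hLf : HasContinuousNormalJet (Lop J0 J1 J2 f)) (n : ℕ) :
    Continuous (interfaceTrace J0 J1 J2 f n) :=
  match n with
  | 0 => by
    show Continuous fun ξ => f 0 ξ
    simpa using hf.continuous_iteratedDeriv 0
  | 1 => by
    show Continuous fun ξ => deriv (fun η => f η ξ) 0
    simpa using hf.continuous_iteratedDeriv 1
  | j + 2 => hLf.continuous_iteratedDeriv j

lemma continuous_interfaceTrace_monomial (hJ0 : HasContinuousNormalJet J0)
    (hJ1 : HasContinuousNormalJet J1) (hJ2 : HasContinuousNormalJet J2) (n i l : ℕ) :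
    Continuous (interfaceTrace J0 J1 J2 (fun η ξ => η ^ i * ξ ^ l) n) :=
  continuous_interfaceTrace ((HasContinuousNormalJet.normal.pow i).mul
    (.const (continuous_pow l))) (hasContinuousNormalJet_Lop_monomial hJ0 hJ1 hJ2 i l) n

lemma interfaceTrace_QEval (hJ0 : HasContinuousNormalJet J0)
    (hJ1 : HasContinuousNormalJet J1) (hJ2 : HasContinuousNormalJet J2)
    {m : ℕ} (c : Fin (m + 1) → Fin (m + 1) → ℝ) (n : ℕ) (ξ : ℝ) :
    interfaceTrace J0 J1 J2 (QEval m c) n ξ =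
      ∑ i : Fin (m + 1), ∑ l : Fin (m + 1),
        c i l * interfaceTrace J0 J1 J2 (fun η ξ => η ^ (i : ℕ) * ξ ^ (l : ℕ)) n ξ :=
  match n with
  | 0 => by simp only [interfaceTrace, QEval, mul_assoc]
  | 1 => by
    simp only [interfaceTrace, QEval, mul_assoc]
    simp (disch := fun_prop) only [deriv_fun_sum, deriv_const_mul_field']
  | j + 2 => by
    have hcd (i l : Fin (m + 1)) : ContDiffAt ℝ j
        (fun η => c i l * Lop J0 J1 J2 (fun η ξ => η ^ (i : ℕ) * ξ ^ (l : ℕ)) η ξ) 0 :=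
      contDiffAt_const.mul
        ((hasContinuousNormalJet_Lop_monomial hJ0 hJ1 hJ2 i l).contDiffAt_nat j ξ)
    simp only [interfaceTrace, funext₂ (Lop_QEval J0 J1 J2 m c)]
    rw [iteratedDeriv_fun_sum fun i _ => ContDiffAt.sum fun l _ => hcd i l]
    refine Finset.sum_congr rfl fun i _ => ?_
    simp only [iteratedDeriv_fun_sum fun l _ => hcd i l, iteratedDeriv_const_mul_field]

lemma continuous_interfaceTrace_QEval (hJ0 : HasContinuousNormalJet J0)
    (hJ1 : HasContinuousNormalJet J1) (hJ2 : HasContinuousNormalJet J2)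
    {m : ℕ} (c : Fin (m + 1) → Fin (m + 1) → ℝ) (n : ℕ) :
    Continuous (interfaceTrace J0 J1 J2 (QEval m c) n) := by
  simp only [funext (interfaceTrace_QEval hJ0 hJ1 hJ2 c n)]
  have := continuous_interfaceTrace_monomial hJ0 hJ1 hJ2 n
  fun_prop

lemma interfaceTrace_QEval_of_forall_lt_eq_zero (hJ0 : HasContinuousNormalJet J0)
    (hJ1 : HasContinuousNormalJet J1) (hJ2 : HasContinuousNormalJet J2) {m : ℕ}
    {c : Fin (m + 1) → Fin (m + 1) → ℝ} {n : Fin (m + 1)} (hc : ∀ i < n, c i = 0) (ξ : ℝ) :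
    interfaceTrace J0 J1 J2 (QEval m c) n ξ =
      (n : ℕ).factorial * (ofFn (m + 1) (c n)).eval ξ := by
  have hmono {i : ℕ} (l : ℕ) (hi : (n : ℕ) ≤ i) :=
    interfaceTrace_monomial_of_le hJ0.contDiffAt hJ1.contDiffAt hJ2.contDiffAt l hi ξ
  rw [interfaceTrace_QEval hJ0 hJ1 hJ2, Finset.sum_eq_single n]
  · simp only [hmono _ le_rfl, if_pos, ofFn_eq_sum_monomial, eval_finsetSum, eval_monomial,
      Finset.mul_sum]
    exact Finset.sum_congr rfl fun l _ => by ring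
  · intro i _ hin
    rcases lt_or_gt_of_ne hin with h | h
    · simp [hc i h]
    · simp [hmono _ (Fin.le_iff_val_le_val.mp h.le), Fin.val_ne_of_ne hin]
  · simp

end

lemma integral_mul_eval_eq_zero_iff {D : ℝ → ℝ} (hD : Continuous D) (a b : ℝ) (m : ℕ) :
    (∀ v : ℝ[X], v.natDegree ≤ m → ∫ ξ in a..b, D ξ * v.eval ξ = 0) ↔
      ∀ k < m + 1, ∫ ξ in a..b, D ξ * ξ ^ k = 0 := by
  refine ⟨fun h k hk => by simpa using h (X ^ k) (by simpa using Nat.lt_succ_iff.mp hk),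
    fun h v hv => ?_⟩
  simp only [eval_eq_sum_range' (Nat.lt_succ_of_le hv), Finset.mul_sum]
  rw [intervalIntegral.integral_finsetSum (f := fun k ξ => D ξ * (v.coeff k * ξ ^ k))
    fun k _ => (hD.mul (continuous_const.mul (continuous_pow k))).intervalIntegrable a b]
  refine Finset.sum_eq_zero fun k hk => ?_
  simp only [mul_left_comm (D _), intervalIntegral.integral_const_mul,
    h k (Finset.mem_range.mp hk), mul_zero]

lemma Polynomial.eq_zero_of_integral_eval_mul_self_eq_zero {a b : ℝ} (hab : a < b) {P : ℝ[X]}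
    (hP : ∫ ξ in a..b, P.eval ξ * P.eval ξ = 0) : P = 0 := by
  refine P.eq_zero_of_infinite_isRoot (Set.Infinite.mono (fun x hx => ?_) (Set.Icc_infinite hab))
  by_contra hne
  exact (intervalIntegral.integral_pos (f := fun ξ => P.eval ξ * P.eval ξ) hab (by fun_prop)
    (fun _ _ => mul_self_nonneg _) ⟨x, hx, mul_self_pos.mpr hne⟩).ne' hP

def traceMoment (J0 J1 J2 : ℝ → ℝ → ℝ) (a b : ℝ) (n k i l : ℕ) : ℝ :=
  ∫ ξ in a..b, interfaceTrace J0 J1 J2 (fun η ξ => η ^ i * ξ ^ l) n ξ * ξ ^ k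

/-- `c ↦ (∫ Tₙ(QEval m c) ξ^k)ₙₖ`, written through the monomials so that it is visibly linear
(see `integral_interfaceTrace_QEval_mul_pow`). -/
def momentMap (J0 J1 J2 : ℝ → ℝ → ℝ) (a b : ℝ) (m : ℕ) :
    (Fin (m + 1) → Fin (m + 1) → ℝ) →ₗ[ℝ] (Fin (m + 1) → Fin (m + 1) → ℝ) where
  toFun c n k := ∑ i, ∑ l, c i l * traceMoment J0 J1 J2 a b n k i l
  map_add' c c' := by ext n k; simp [add_mul, Finset.sum_add_distrib]
  map_smul' r c := by ext n k; simp [Finset.mul_sum, mul_assoc]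

section

variable {J0 J1 J2 : ℝ → ℝ → ℝ}

lemma integral_interfaceTrace_QEval_mul_pow (hJ0 : HasContinuousNormalJet J0)
    (hJ1 : HasContinuousNormalJet J1) (hJ2 : HasContinuousNormalJet J2) (a b : ℝ) {m : ℕ}
    (c : Fin (m + 1) → Fin (m + 1) → ℝ) (n k : Fin (m + 1)) :
    ∫ ξ in a..b, interfaceTrace J0 J1 J2 (QEval m c) n ξ * ξ ^ (k : ℕ) =
      momentMap J0 J1 J2 a b m c n k := by
  have hcont (i l : Fin (m + 1)) : Continuous fun ξ => c i l *
      (interfaceTrace J0 J1 J2 (fun η ξ => η ^ (i : ℕ) * ξ ^ (l : ℕ)) n ξ * ξ ^ (k : ℕ)) :=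
    continuous_const.mul ((continuous_interfaceTrace_monomial hJ0 hJ1 hJ2 n i l).mul
      (continuous_pow _))
  simp only [interfaceTrace_QEval hJ0 hJ1 hJ2, Finset.sum_mul, mul_assoc]
  rw [intervalIntegral.integral_finsetSum fun i _ =>
    (continuous_finsetSum _ fun l _ => hcont i l).intervalIntegrable a b]
  simp only [intervalIntegral.integral_finsetSum fun l _ => (hcont _ l).intervalIntegrable a b,
    intervalIntegral.integral_const_mul]
  rfl

lemma momentMap_injective {a b : ℝ} (hab : a < b) (hJ0 : HasContinuousNormalJet J0)
    (hJ1 : HasContinuousNormalJet J1) (hJ2 : HasContinuousNormalJet J2) (m : ℕ) :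
    Function.Injective (momentMap J0 J1 J2 a b m) := by
  rw [← LinearMap.ker_eq_bot, LinearMap.ker_eq_bot']
  intro c hc
  have hrow (n : Fin (m + 1)) (hlow : ∀ i < n, c i = 0) : c n = 0 := by
    have hmoments : ∀ k < m + 1,
        ∫ ξ in a..b, interfaceTrace J0 J1 J2 (QEval m c) n ξ * ξ ^ k = 0 := fun k hk => by
      rw [integral_interfaceTrace_QEval_mul_pow hJ0 hJ1 hJ2 a b c n ⟨k, hk⟩, hc]
      rfl
    have hP := (integral_mul_eval_eq_zero_iff (continuous_interfaceTrace_QEval hJ0 hJ1 hJ2 c n)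
      a b m).mpr hmoments (ofFn (m + 1) (c n)) (Nat.lt_succ_iff.mp (ofFn_natDegree_lt (by omega) _))
    simp only [interfaceTrace_QEval_of_forall_lt_eq_zero hJ0 hJ1 hJ2 hlow, mul_assoc,
      intervalIntegral.integral_const_mul, mul_eq_zero, Nat.cast_eq_zero,
      Nat.factorial_ne_zero, false_or] at hP
    exact injective_ofFn (m + 1) ((eq_zero_of_integral_eval_mul_self_eq_zero hab hP).trans
      (map_zero _).symm)
  exact funext fun n => WellFoundedLT.induction n hrow

lemma integral_jump_mul_pow (hJ0 : HasContinuousNormalJet J0)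
    (hJ1 : HasContinuousNormalJet J1) (hJ2 : HasContinuousNormalJet J2) (a b α β : ℝ) {m : ℕ}
    (cp cm : Fin (m + 1) → Fin (m + 1) → ℝ) (n k : Fin (m + 1)) :
    ∫ ξ in a..b, (α * interfaceTrace J0 J1 J2 (QEval m cp) n ξ -
        β * interfaceTrace J0 J1 J2 (QEval m cm) n ξ) * ξ ^ (k : ℕ) =
      α * momentMap J0 J1 J2 a b m cp n k - β * momentMap J0 J1 J2 a b m cm n k := by
  have hint (c : Fin (m + 1) → Fin (m + 1) → ℝ) : IntervalIntegrable
      (fun ξ => interfaceTrace J0 J1 J2 (QEval m c) n ξ * ξ ^ (k : ℕ)) volume a b :=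
    ((continuous_interfaceTrace_QEval hJ0 hJ1 hJ2 c n).mul
      (continuous_pow _)).intervalIntegrable a b
  simp only [sub_mul, mul_assoc]
  rw [intervalIntegral.integral_sub ((hint cp).const_mul α) ((hint cm).const_mul β),
    intervalIntegral.integral_const_mul, intervalIntegral.integral_const_mul,
    integral_interfaceTrace_QEval_mul_pow hJ0 hJ1 hJ2,
    integral_interfaceTrace_QEval_mul_pow hJ0 hJ1 hJ2]

theorem existsUnique_QEval_jump {a b : ℝ} (hab : a < b) {α β : ℕ → ℝ} (hα : ∀ n, α n ≠ 0)
    (hJ0 : HasContinuousNormalJet J0) (hJ1 : HasContinuousNormalJet J1)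
    (hJ2 : HasContinuousNormalJet J2) {m : ℕ} (cm : Fin (m + 1) → Fin (m + 1) → ℝ) :
    ∃! cp : Fin (m + 1) → Fin (m + 1) → ℝ, ∀ n < m + 1, ∀ v : ℝ[X], v.natDegree ≤ m →
      ∫ ξ in a..b, (α n * interfaceTrace J0 J1 J2 (QEval m cp) n ξ -
        β n * interfaceTrace J0 J1 J2 (QEval m cm) n ξ) * v.eval ξ = 0 := by
  set Φ := momentMap J0 J1 J2 a b m
  have hinj : Function.Injective Φ := momentMap_injective hab hJ0 hJ1 hJ2 m
  have hΦ : Function.Bijective Φ := ⟨hinj, LinearMap.injective_iff_surjective.mp hinj⟩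
  refine (existsUnique_congr fun cp => ?_).mpr (hΦ.existsUnique fun n k => β n / α n * Φ cm n k)
  rw [funext_iff, Fin.forall_iff]
  refine forall₂_congr fun n hn => ?_
  have hcp := continuous_interfaceTrace_QEval hJ0 hJ1 hJ2 cp n
  have hcm := continuous_interfaceTrace_QEval hJ0 hJ1 hJ2 cm n
  rw [integral_mul_eval_eq_zero_iff (by fun_prop) a b m, funext_iff, Fin.forall_iff]
  refine forall₂_congr fun k hk => ?_
  rw [integral_jump_mul_pow hJ0 hJ1 hJ2 a b (α n) (β n) cp cm ⟨n, hn⟩ ⟨k, hk⟩, sub_eq_zero,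
    div_mul_eq_mul_div, eq_div_iff (hα n), mul_comm]

end

lemma forall_lt_succ_iff_zero_one_add_two {m : ℕ} (hm : 1 ≤ m) {P : ℕ → Prop} :
    (∀ n < m + 1, P n) ↔ P 0 ∧ P 1 ∧ ∀ j, j + 2 ≤ m → P (j + 2) := by
  refine ⟨fun h => ⟨h 0 (by omega), h 1 (by omega), fun j hj => h (j + 2) (by omega)⟩, ?_⟩
  rintro ⟨h0, h1, h2⟩ (_ | _ | j) hn
  exacts [h0, h1, h2 j (by omega)]

lemma contDiff_one_curvature {g : ℝ → EuclideanSpace ℝ (Fin 2)} (hg : ContDiff ℝ 3 g)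
    (hreg : ∀ ξ, deriv g ξ ≠ 0) :
    ContDiff ℝ 1 fun ξ =>
      (deriv g ξ 0 * deriv (deriv g) ξ 1 - deriv g ξ 1 * deriv (deriv g) ξ 0) /
        ‖deriv g ξ‖ ^ 3 := by
  have h2 : ContDiff ℝ 2 (deriv g) := hg.deriv'
  have h1 : ContDiff ℝ 1 (deriv g) := h2.of_le one_le_two
  have c1 (i : Fin 2) : ContDiff ℝ 1 fun ξ => deriv g ξ i := by
    exact (EuclideanSpace.proj i).contDiff.comp h1
  have c2 (i : Fin 2) : ContDiff ℝ 1 fun ξ => deriv (deriv g) ξ i := by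
    exact (EuclideanSpace.proj i).contDiff.comp (show ContDiff ℝ (1 + 1) (deriv g) from h2).deriv'
  exact (((c1 0).mul (c2 1)).sub ((c1 1).mul (c2 0))).div ((h1.norm ℝ hreg).pow 3)
    fun ξ => pow_ne_zero 3 (norm_ne_zero_iff.mpr (hreg ξ))

theorem ife_extension_exists_unique_general
    (m : ℕ) (hm : 1 ≤ m) (a b : ℝ) (hab : a < b)
    (βp βm : ℝ) (hβp : 0 < βp)
    (g : ℝ → EuclideanSpace ℝ (Fin 2)) (hg : ContDiff ℝ 3 g)
    (hreg : ∀ ξ : ℝ, deriv g ξ ≠ 0)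
    (κ : ℝ → ℝ)
    (hκ : ∀ ξ, κ ξ =
      (deriv g ξ 0 * deriv (deriv g) ξ 1 - deriv g ξ 1 * deriv (deriv g) ξ 0) /
        ‖deriv g ξ‖ ^ 3)
    (ψ J0 J1 J2 : ℝ → ℝ → ℝ)
    (hψ : ∀ η ξ, ψ η ξ = (1 + η * κ ξ)⁻¹)
    (hJ0 : ∀ η ξ, J0 η ξ = (ψ η ξ / ‖deriv g ξ‖) ^ 2)
    (hJ1 : ∀ η ξ, J1 η ξ = κ ξ * ψ η ξ)
    (hJ2 : ∀ η ξ, J2 η ξ = -(ψ η ξ / ‖deriv g ξ‖) ^ 2 *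
      (η * deriv κ ξ * ψ η ξ +
        (deriv g ξ 0 * deriv (deriv g) ξ 0 + deriv g ξ 1 * deriv (deriv g) ξ 1) /
          ‖deriv g ξ‖ ^ 2)) :
    ∀ cm : Fin (m + 1) → Fin (m + 1) → ℝ,
      ∃! cp : Fin (m + 1) → Fin (m + 1) → ℝ,
        (∀ v : Polynomial ℝ, v.natDegree ≤ m →
          ∫ ξ in a..b, (QEval m cp 0 ξ - QEval m cm 0 ξ) * v.eval ξ = 0) ∧
        (∀ v : Polynomial ℝ, v.natDegree ≤ m →
          ∫ ξ in a..b,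
            (βp * deriv (fun t => QEval m cp t ξ) 0 -
              βm * deriv (fun t => QEval m cm t ξ) 0) * v.eval ξ = 0) ∧
        (∀ j : ℕ, j + 2 ≤ m → ∀ v : Polynomial ℝ, v.natDegree ≤ m →
          ∫ ξ in a..b,
            (βp * iteratedDeriv j (fun t => Lop J0 J1 J2 (QEval m cp) t ξ) 0 -
              βm * iteratedDeriv j (fun t => Lop J0 J1 J2 (QEval m cm) t ξ) 0) *
              v.eval ξ = 0) := by
  have hκ1 : ContDiff ℝ 1 κ := by rw [funext hκ]; exact contDiff_one_curvature hg hreg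
  have hg1 : Continuous (deriv g) := hg.continuous_deriv (by norm_num)
  have hg2 : Continuous (deriv (deriv g)) := (hg.deriv' (n := 2)).continuous_deriv (by norm_num)
  have hN : Continuous fun ξ => ‖deriv g ξ‖⁻¹ :=
    hg1.norm.inv₀ fun ξ => norm_ne_zero_iff.mpr (hreg ξ)
  have hG : Continuous fun ξ => (deriv g ξ 0 * deriv (deriv g) ξ 0 +
      deriv g ξ 1 * deriv (deriv g) ξ 1) * ‖deriv g ξ‖⁻¹ ^ 2 := by
    fun_prop
  have hψj : HasContinuousNormalJet ψ := by
    rw [funext₂ hψ]; exact .inv_one_add_mul hκ1.continuous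
  have hJ0j : HasContinuousNormalJet J0 := by
    simp only [funext₂ hJ0, div_eq_mul_inv]; exact (hψj.mul (.const hN)).pow 2
  have hJ1j : HasContinuousNormalJet J1 := by
    rw [funext₂ hJ1]; exact (HasContinuousNormalJet.const hκ1.continuous).mul hψj
  have hJ2j : HasContinuousNormalJet J2 := by
    simp only [funext₂ hJ2, div_eq_mul_inv, ← inv_pow]
    exact ((hψj.mul (.const hN)).pow 2).neg.mul
      (((HasContinuousNormalJet.normal.mul (.const (hκ1.continuous_deriv le_rfl))).mul hψj).add
        (.const hG))
  intro cm
  refine (existsUnique_congr fun cp => ?_).mp (existsUnique_QEval_jump hab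
    (α := fun n => if n = 0 then 1 else βp) (β := fun n => if n = 0 then 1 else βm)
    (fun n => by split_ifs; exacts [one_ne_zero, hβp.ne']) hJ0j hJ1j hJ2j cm)
  rw [forall_lt_succ_iff_zero_one_add_two hm]
  simp [interfaceTrace]

/-- Existence and uniqueness of an IFE extension: given `φ⁻ ∈ Q^m` there is a unique
`φ⁺ ∈ Q^m` such that the piecewise polynomial satisfies the weak jump conditions,
including the weak jump conditions on `∂^j_η L(φ)` for `j = 0,…,m-2`. -/
theorem ife_extension_exists_unique
    (m : ℕ) (hm : 1 ≤ m) (a b : ℝ) (hab : a < b)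
    (βp βm : ℝ) (hβp : 0 < βp) (hβm : 0 < βm)
    (g : ℝ → EuclideanSpace ℝ (Fin 2)) (hg : ContDiff ℝ 3 g)
    (hreg : ∀ ξ : ℝ, deriv g ξ ≠ 0)
    (κ : ℝ → ℝ)
    (hκ : ∀ ξ, κ ξ =
      (deriv g ξ 0 * deriv (deriv g) ξ 1 - deriv g ξ 1 * deriv (deriv g) ξ 0) /
        ‖deriv g ξ‖ ^ 3)
    (ψ J0 J1 J2 : ℝ → ℝ → ℝ)
    (hψ : ∀ η ξ, ψ η ξ = (1 + η * κ ξ)⁻¹)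
    (hJ0 : ∀ η ξ, J0 η ξ = (ψ η ξ / ‖deriv g ξ‖) ^ 2)
    (hJ1 : ∀ η ξ, J1 η ξ = κ ξ * ψ η ξ)
    (hJ2 : ∀ η ξ, J2 η ξ = -(ψ η ξ / ‖deriv g ξ‖) ^ 2 *
      (η * deriv κ ξ * ψ η ξ +
        (deriv g ξ 0 * deriv (deriv g) ξ 0 + deriv g ξ 1 * deriv (deriv g) ξ 1) /
          ‖deriv g ξ‖ ^ 2)) :
    ∀ cm : Fin (m + 1) → Fin (m + 1) → ℝ,
      ∃! cp : Fin (m + 1) → Fin (m + 1) → ℝ,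
        (∀ v : Polynomial ℝ, v.natDegree ≤ m →
          ∫ ξ in a..b, (QEval m cp 0 ξ - QEval m cm 0 ξ) * v.eval ξ = 0) ∧
        (∀ v : Polynomial ℝ, v.natDegree ≤ m →
          ∫ ξ in a..b,
            (βp * deriv (fun t => QEval m cp t ξ) 0 -
              βm * deriv (fun t => QEval m cm t ξ) 0) * v.eval ξ = 0) ∧
        (∀ j : ℕ, j + 2 ≤ m → ∀ v : Polynomial ℝ, v.natDegree ≤ m →
          ∫ ξ in a..b,
            (βp * iteratedDeriv j (fun t => Lop J0 J1 J2 (QEval m cp) t ξ) 0 -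
              βm * iteratedDeriv j (fun t => Lop J0 J1 J2 (QEval m cm) t ξ) 0) *
              v.eval ξ = 0) :=
  ife_extension_exists_unique_general m hm a b hab βp βm hβp g hg hreg κ hκ ψ J0 J1 J2 hψ hJ0 hJ1
    hJ2
end
end

section
/- With the Frenet coordinates (η,ξ) on a tubular neighborhood of a regular C² curve g with unit normal n and curvature κ, the divergence of the normal vector field x ↦ n(ξ(x)) equals κ(ξ)(1+ηκ(ξ))⁻¹, and the divergence of the tangent vector field x ↦ τ(ξ(x)) equals 0. -/
/-! Both fields factor through `ξ`, so by the chain rule the divergence of `F ∘ ξ` is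
`⟪∇ξ, F'(ξ)⟫`. The Frenet–Serret formulas `τ' = -κ‖g'‖ n` and `n' = κ‖g'‖ τ`, together with
`∇ξ = ‖g'‖⁻¹(1 + ηκ)⁻¹ τ`, give `κ(1 + ηκ)⁻¹ ⟪τ, τ⟫ = κ(1 + ηκ)⁻¹` for the normal field and a
multiple of `⟪n, τ⟫ = 0` for the tangent field. -/

noncomputable section

def div2 (F : EuclideanSpace ℝ (Fin 2) → EuclideanSpace ℝ (Fin 2))
    (x : EuclideanSpace ℝ (Fin 2)) : ℝ :=
  ∑ i : Fin 2, fderiv ℝ F x (EuclideanSpace.single i 1) i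

open scoped RealInnerProductSpace

theorem HasDerivAt.norm {F : Type*} [NormedAddCommGroup F] [InnerProductSpace ℝ F]
    {v : ℝ → F} {v' : F} {t : ℝ} (hv : HasDerivAt v v' t) (h0 : v t ≠ 0) :
    HasDerivAt (fun s => ‖v s‖) (⟪v t, v'⟫ / ‖v t‖) t := by
  have hsqrt := hv.norm_sq.sqrt (pow_ne_zero 2 (norm_ne_zero_iff.2 h0))
  simp only [Real.sqrt_sq (norm_nonneg _)] at hsqrt
  convert hsqrt using 1
  field_simp

theorem hasDerivAt_euclidean {ι : Type*} [Fintype ι] {f : ℝ → EuclideanSpace ℝ ι}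
    {f' : EuclideanSpace ℝ ι} {t : ℝ} :
    HasDerivAt f f' t ↔ ∀ i, HasDerivAt (fun s => f s i) (f' i) t := by
  rw [← hasDerivAt_pi]
  constructor
  · exact (EuclideanSpace.equiv ι ℝ).hasFDerivAt.comp_hasDerivAt t
  · exact (EuclideanSpace.equiv ι ℝ).symm.hasFDerivAt.comp_hasDerivAt t

theorem div2_comp_eq_inner {F : ℝ → EuclideanSpace ℝ (Fin 2)} {F' : EuclideanSpace ℝ (Fin 2)}
    {φ : EuclideanSpace ℝ (Fin 2) → ℝ} {x : EuclideanSpace ℝ (Fin 2)}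
    (hF : HasDerivAt F F' (φ x)) (hφ : DifferentiableAt ℝ φ x) :
    div2 (fun y => F (φ y)) x = ⟪gradient φ x, F'⟫ := by
  have hcomp : HasFDerivAt (fun y => F (φ y)) ((1 : ℝ →L[ℝ] ℝ).smulRight F' ∘L fderiv ℝ φ x) x :=
    hF.hasFDerivAt.comp x hφ.hasFDerivAt
  rw [div2, hcomp.fderiv, hφ.hasGradientAt.hasFDerivAt.fderiv]
  conv_rhs => rw [← (EuclideanSpace.basisFun (Fin 2) ℝ).sum_repr F']
  simp [Fin.sum_univ_two, mul_comm]

section Frenet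

variable {v τ n : ℝ → EuclideanSpace ℝ (Fin 2)} {κ : ℝ → ℝ} {ξ : ℝ}

theorem inner_normal_tangent (hn : n ξ = ![τ ξ 1, -(τ ξ 0)]) : ⟪n ξ, τ ξ⟫ = 0 := by
  simp [PiLp.inner_apply, hn, Fin.sum_univ_two, mul_comm]

theorem hasDerivAt_unitTangent (hv : DifferentiableAt ℝ v ξ) (h0 : v ξ ≠ 0)
    (hτ : ∀ t, τ t = ‖v t‖⁻¹ • v t) (hn : n ξ = ![τ ξ 1, -(τ ξ 0)])
    (hκ : κ ξ = (v ξ 0 * deriv v ξ 1 - v ξ 1 * deriv v ξ 0) / ‖v ξ‖ ^ 3) :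
    HasDerivAt τ (-(κ ξ * ‖v ξ‖) • n ξ) ξ := by
  have hs : ‖v ξ‖ ≠ 0 := norm_ne_zero_iff.2 h0
  have hs2 : ‖v ξ‖ ^ 2 = v ξ 0 ^ 2 + v ξ 1 ^ 2 := by
    simp [EuclideanSpace.real_norm_sq_eq, Fin.sum_univ_two]
  rw [show τ = fun t => ‖v t‖⁻¹ • v t from funext hτ]
  refine (((hv.hasDerivAt.norm h0).inv hs).smul hv.hasDerivAt).congr_deriv ?_
  ext i
  fin_cases i <;>
    simp only [hn, hτ, hκ, Pi.inv_apply, PiLp.inner_apply, RCLike.inner_apply, Real.ringHom_apply,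
      Fin.sum_univ_two, PiLp.add_apply, PiLp.smul_apply, PiLp.neg_apply, smul_eq_mul, neg_smul,
      Fin.zero_eta, Fin.mk_one, Matrix.cons_val_zero, Matrix.cons_val_one,
      Matrix.cons_val_fin_one] <;>
    field_simp
  · linear_combination (deriv v ξ 0) * hs2
  · linear_combination (deriv v ξ 1) * hs2

theorem hasDerivAt_normal_of_hasDerivAt_tangent {c : ℝ} (hn : ∀ t, n t = ![τ t 1, -(τ t 0)])
    (hτ' : HasDerivAt τ (c • n ξ) ξ) : HasDerivAt n (-c • τ ξ) ξ := by
  rw [hasDerivAt_euclidean] at hτ' ⊢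
  intro i
  fin_cases i
  · simpa [hn] using hτ' 1
  · simpa [hn] using (hτ' 0).fun_neg

end Frenet

theorem div_normal_tangent_general
    (g : ℝ → EuclideanSpace ℝ (Fin 2))
    (hg : ContDiff ℝ 2 g)
    (hreg : ∀ ξ : ℝ, deriv g ξ ≠ 0)
    (τ n : ℝ → EuclideanSpace ℝ (Fin 2)) (κ : ℝ → ℝ)
    (hτ : ∀ ξ, τ ξ = ‖deriv g ξ‖⁻¹ • deriv g ξ)
    (hn : ∀ ξ, n ξ = ![τ ξ 1, -(τ ξ 0)])
    (hκ : ∀ ξ, κ ξ =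
      (deriv g ξ 0 * deriv (deriv g) ξ 1 - deriv g ξ 1 * deriv (deriv g) ξ 0) /
        ‖deriv g ξ‖ ^ 3)
    (ηc ξc : EuclideanSpace ℝ (Fin 2) → ℝ)
    (x : EuclideanSpace ℝ (Fin 2))
    (hdξ : DifferentiableAt ℝ ξc x)
    (hgradξ : gradient ξc x =
      (‖deriv g (ξc x)‖⁻¹ * (1 + ηc x * κ (ξc x))⁻¹) • τ (ξc x)) :
    div2 (fun y => n (ξc y)) x = κ (ξc x) * (1 + ηc x * κ (ξc x))⁻¹ ∧
    div2 (fun y => τ (ξc y)) x = 0 := by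
  have hg' : DifferentiableAt ℝ (deriv g) (ξc x) := by
    simpa using hg.differentiable_iteratedDeriv 1 (by norm_num) (ξc x)
  have hτ' := hasDerivAt_unitTangent hg' (hreg _) hτ (hn _) (hκ _)
  have hn' := hasDerivAt_normal_of_hasDerivAt_tangent hn hτ'
  rw [div2_comp_eq_inner hn' hdξ, div2_comp_eq_inner hτ' hdξ, hgradξ]
  have hs : ‖deriv g (ξc x)‖ ≠ 0 := norm_ne_zero_iff.2 (hreg _)
  constructor
  · rw [neg_neg, real_inner_smul_left, real_inner_smul_right, real_inner_self_eq_norm_sq, hτ,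
      norm_smul, norm_inv, norm_norm]
    field_simp
  · rw [real_inner_smul_left, real_inner_smul_right, real_inner_comm, inner_normal_tangent (hn _)]
    simp

/-- Divergence of the normal and tangent fields in Frenet coordinates:
`∇·n(ξ(x)) = κ(ξ)(1+ηκ(ξ))⁻¹` and `∇·τ(ξ(x)) = 0`. -/
theorem div_normal_tangent
    (g : ℝ → EuclideanSpace ℝ (Fin 2))
    (hg : ContDiff ℝ 2 g)
    (hreg : ∀ ξ : ℝ, deriv g ξ ≠ 0)
    (τ n : ℝ → EuclideanSpace ℝ (Fin 2)) (κ : ℝ → ℝ)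
    (hτ : ∀ ξ, τ ξ = ‖deriv g ξ‖⁻¹ • deriv g ξ)
    (hn : ∀ ξ, n ξ = ![τ ξ 1, -(τ ξ 0)])
    (hκ : ∀ ξ, κ ξ =
      (deriv g ξ 0 * deriv (deriv g) ξ 1 - deriv g ξ 1 * deriv (deriv g) ξ 0) /
        ‖deriv g ξ‖ ^ 3)
    (ηc ξc : EuclideanSpace ℝ (Fin 2) → ℝ)
    (x : EuclideanSpace ℝ (Fin 2))
    (hdη : DifferentiableAt ℝ ηc x) (hdξ : DifferentiableAt ℝ ξc x)
    (hgradη : gradient ηc x = n (ξc x))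
    (hgradξ : gradient ξc x =
      (‖deriv g (ξc x)‖⁻¹ * (1 + ηc x * κ (ξc x))⁻¹) • τ (ξc x))
    (hne : 1 + ηc x * κ (ξc x) ≠ 0) :
    div2 (fun y => n (ξc y)) x = κ (ξc x) * (1 + ηc x * κ (ξc x))⁻¹ ∧
    div2 (fun y => τ (ξc y)) x = 0 :=
  div_normal_tangent_general g hg hreg τ n κ hτ hn hκ ηc ξc x hdξ hgradξ
end
end

section
/- Let K be an interface element of diameter h contained in a tubular neighborhood of Γ where the Frenet transformation P with inverse R = (η,ξ) satisfies ‖∇ξ(x)‖ ≤ C₁ and |det DP| ≥ c₀ > 0. If K is a square of side proportional to h and the Frenet fictitious element K̂_F = [−h,h] × Γ̂ with ξ(K) ⊆ Γ̂ and |Γ̂| = diam(ξ(K)), then c h ≤ |Γ̂| ≤ C h for constants c, C depending only on c₀, C₁ (and not on h, the interface location, or the coefficients). -/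
/-!
The upper bound is the mean value inequality for `ξ` on the convex square `K`, whose diameter
is `h`. For the lower bound, the area formula together with `|det D(η, ξ)| ≥ c₀` gives
`c₀ |K| ≤ |(η, ξ)(K)|`, and `(η, ξ)(K)` lies in the box `[-h, h] × [a, b]`; as `|K| = h² / 2`,
this forces `c₀ h² / 2 ≤ 2 h (b - a)`.
-/

noncomputable section

/-- A square (interface element) of side `s` with lower-left corner `p`. -/
def sqElem (p : EuclideanSpace ℝ (Fin 2)) (s : ℝ) : Set (EuclideanSpace ℝ (Fin 2)) :=
  {x | ∀ i : Fin 2, x i ∈ Set.Icc (p i) (p i + s)}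

open MeasureTheory Set

local notation "ℝ²" => EuclideanSpace ℝ (Fin 2)

namespace EuclideanSpace

variable {ι : Type*}

theorem setOf_forall_mem_Icc_eq_preimage (l u : ι → ℝ) :
    {x : EuclideanSpace ℝ ι | ∀ i, x i ∈ Icc (l i) (u i)} =
      WithLp.ofLp ⁻¹' univ.pi fun i => Icc (l i) (u i) := by
  ext x
  simp only [mem_preimage, mem_univ_pi]
  rfl

variable [Fintype ι]

theorem dist_le_sqrt_card_mul {x y : EuclideanSpace ℝ ι} {s : ℝ} (hs : 0 ≤ s)
    (hxy : ∀ i, |x i - y i| ≤ s) : dist x y ≤ √(Fintype.card ι) * s := by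
  have hsum : ∑ i, dist (x i) (y i) ^ 2 ≤ Fintype.card ι * s ^ 2 := by
    calc ∑ i, dist (x i) (y i) ^ 2 ≤ ∑ _i : ι, s ^ 2 := by
          gcongr with i
          rw [Real.dist_eq]
          exact hxy i
      _ = Fintype.card ι * s ^ 2 := by simp
  calc dist x y = √(∑ i, dist (x i) (y i) ^ 2) := dist_eq x y
    _ ≤ √(Fintype.card ι * s ^ 2) := Real.sqrt_le_sqrt hsum
    _ = √(Fintype.card ι) * s := by rw [Real.sqrt_mul (Nat.cast_nonneg _), Real.sqrt_sq hs]

theorem measurableSet_setOf_forall_mem_Icc (l u : ι → ℝ) :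
    MeasurableSet {x : EuclideanSpace ℝ ι | ∀ i, x i ∈ Icc (l i) (u i)} := by
  rw [setOf_forall_mem_Icc_eq_preimage]
  exact (PiLp.volume_preserving_ofLp ι).measurable
    (MeasurableSet.univ_pi fun _ => measurableSet_Icc)

theorem volume_setOf_forall_mem_Icc (l u : ι → ℝ) :
    volume {x : EuclideanSpace ℝ ι | ∀ i, x i ∈ Icc (l i) (u i)} =
      ∏ i, ENNReal.ofReal (u i - l i) := by
  rw [setOf_forall_mem_Icc_eq_preimage, (PiLp.volume_preserving_ofLp ι).measure_preimage
    (MeasurableSet.univ_pi fun _ => measurableSet_Icc).nullMeasurableSet, volume_pi_pi]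
  simp only [Real.volume_Icc]

end EuclideanSpace

section sqElem

variable {p : ℝ²} {s : ℝ}

theorem convex_sqElem : Convex ℝ (sqElem p s) := by
  intro x hx y hy t u ht hu htu i
  exact convex_Icc (p i) (p i + s) (hx i) (hy i) ht hu htu

theorem measurableSet_sqElem : MeasurableSet (sqElem p s) :=
  EuclideanSpace.measurableSet_setOf_forall_mem_Icc _ _

theorem volume_sqElem : volume (sqElem p s) = ENNReal.ofReal s ^ 2 := by
  rw [sqElem, EuclideanSpace.volume_setOf_forall_mem_Icc]
  simp [sq]

theorem dist_le_of_mem_sqElem (hs : 0 ≤ s) {x y : ℝ²}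
    (hx : x ∈ sqElem p s) (hy : y ∈ sqElem p s) : dist x y ≤ √2 * s := by
  have := EuclideanSpace.dist_le_sqrt_card_mul (x := x) (y := y) hs fun i =>
    abs_sub_le_iff.2 ⟨by linarith [(hx i).2, (hy i).1], by linarith [(hx i).1, (hy i).2]⟩
  simpa only [Fintype.card_fin, Nat.cast_ofNat] using this

end sqElem

theorem diam_image_le_of_norm_fderiv_le {E : Type*} [NormedAddCommGroup E] [NormedSpace ℝ E]
    {f : E → ℝ} {s : Set E} {C d : ℝ} (hs : Convex ℝ s) (hf : ∀ x ∈ s, DifferentiableAt ℝ f x)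
    (hf' : ∀ x ∈ s, ‖fderiv ℝ f x‖ ≤ C) (hC : 0 ≤ C) (hd : 0 ≤ d)
    (hdist : ∀ x ∈ s, ∀ y ∈ s, dist x y ≤ d) : Metric.diam (f '' s) ≤ C * d := by
  refine Metric.diam_le_of_forall_dist_le (by positivity) ?_
  rintro _ ⟨x, hx, rfl⟩ _ ⟨y, hy, rfl⟩
  calc dist (f x) (f y) ≤ C * dist x y := by
        simpa only [dist_eq_norm] using hs.norm_image_sub_le_of_norm_fderiv_le hf hf' hy hx
    _ ≤ C * d := by gcongr; exact hdist x hx y hy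

theorem ofReal_mul_addHaar_le_addHaar_image {E : Type*} [NormedAddCommGroup E] [NormedSpace ℝ E]
    [FiniteDimensional ℝ E] [MeasurableSpace E] [BorelSpace E] (μ : Measure E)
    [μ.IsAddHaarMeasure] {s : Set E} {f : E → E} {f' : E → E →L[ℝ] E} {c : ℝ}
    (hs : MeasurableSet s) (hf' : ∀ x ∈ s, HasFDerivWithinAt f (f' x) s x) (hf : InjOn f s)
    (hc : ∀ x ∈ s, c ≤ |(f' x).det|) : ENNReal.ofReal c * μ s ≤ μ (f '' s) := by
  rw [← lintegral_abs_det_fderiv_eq_addHaar_image μ hs hf' hf, ← setLIntegral_const]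
  exact setLIntegral_mono' hs fun x hx => ENNReal.ofReal_le_ofReal (hc x hx)

theorem hasFDerivAt_toLp_pair {E : Type*} [NormedAddCommGroup E] [NormedSpace ℝ E]
    {η ξ : E → ℝ} {η' ξ' : E →L[ℝ] ℝ} {x : E} (hη : HasFDerivAt η η' x)
    (hξ : HasFDerivAt ξ ξ' x) :
    HasFDerivAt (fun x => !₂[η x, ξ x])
      ((EuclideanSpace.equiv (Fin 2) ℝ).symm.toContinuousLinearMap.comp
        (ContinuousLinearMap.pi ![η', ξ'])) x := by
  refine (EuclideanSpace.equiv (Fin 2) ℝ).symm.hasFDerivAt.comp x ?_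
  rw [hasFDerivAt_pi']
  intro i
  fin_cases i
  · simpa using hη
  · simpa using hξ

theorem det_toLp_pair (η' ξ' : ℝ² →L[ℝ] ℝ) :
    ((EuclideanSpace.equiv (Fin 2) ℝ).symm.toContinuousLinearMap.comp
        (ContinuousLinearMap.pi ![η', ξ'])).det =
      !![η' (EuclideanSpace.single 0 1), η' (EuclideanSpace.single 1 1);
         ξ' (EuclideanSpace.single 0 1), ξ' (EuclideanSpace.single 1 1)].det := by
  rw [ContinuousLinearMap.det, ← LinearMap.det_toMatrix (EuclideanSpace.basisFun (Fin 2) ℝ).toBasis]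
  congr 1
  ext i j
  fin_cases i <;> fin_cases j <;> simp [LinearMap.toMatrix_apply]

theorem ofReal_mul_volume_le_of_pair_mem_Icc {S : Set ℝ²} (hS : MeasurableSet S) {η ξ : ℝ² → ℝ}
    {c l₀ u₀ l₁ u₁ : ℝ} (hdiff : ∀ x ∈ S, DifferentiableAt ℝ η x ∧ DifferentiableAt ℝ ξ x)
    (hinj : InjOn (fun x => (η x, ξ x)) S)
    (hdet : ∀ x ∈ S, c ≤ |!![fderiv ℝ η x (EuclideanSpace.single 0 1),
        fderiv ℝ η x (EuclideanSpace.single 1 1);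
        fderiv ℝ ξ x (EuclideanSpace.single 0 1), fderiv ℝ ξ x (EuclideanSpace.single 1 1)].det|)
    (hη : ∀ x ∈ S, η x ∈ Icc l₀ u₀) (hξ : ∀ x ∈ S, ξ x ∈ Icc l₁ u₁) :
    ENNReal.ofReal c * volume S ≤ ENNReal.ofReal (u₀ - l₀) * ENNReal.ofReal (u₁ - l₁) := by
  set F : ℝ² → ℝ² := fun x => !₂[η x, ξ x]
  have hF : InjOn F S := fun x hx y hy hxy =>
    hinj hx hy (Prod.ext (congrArg (· 0) hxy) (congrArg (· 1) hxy))
  calc ENNReal.ofReal c * volume S ≤ volume (F '' S) := by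
        refine ofReal_mul_addHaar_le_addHaar_image volume (f' := fun x =>
          (EuclideanSpace.equiv (Fin 2) ℝ).symm.toContinuousLinearMap.comp
            (ContinuousLinearMap.pi ![fderiv ℝ η x, fderiv ℝ ξ x])) hS (fun x hx => ?_) hF
          fun x hx => ?_
        · exact (hasFDerivAt_toLp_pair (hdiff x hx).1.hasFDerivAt
            (hdiff x hx).2.hasFDerivAt).hasFDerivWithinAt
        · rw [det_toLp_pair]
          exact hdet x hx
    _ ≤ volume {y : ℝ² | ∀ i, y i ∈ Icc (![l₀, l₁] i) (![u₀, u₁] i)} := by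
        refine measure_mono ?_
        rintro _ ⟨x, hx, rfl⟩ i
        fin_cases i
        exacts [hη x hx, hξ x hx]
    _ = ENNReal.ofReal (u₀ - l₀) * ENNReal.ofReal (u₁ - l₁) := by
        rw [EuclideanSpace.volume_setOf_forall_mem_Icc, Fin.prod_univ_two]
        rfl

/-- `|Γ̂| ≃ h`: the length of the Frenet fictitious interface `Γ̂` (the `ξ`-image of the
interface element `K`) is comparable to the element diameter `h`, with constants depending
only on the Jacobian bounds `c₀, C₁` and not on `h`, the interface location, or coefficients. -/
theorem fictitious_interface_length_comparable
    (c₀ C₁ : ℝ) (hc₀ : 0 < c₀) (hC₁ : 0 < C₁) :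
    ∃ c C : ℝ, 0 < c ∧ 0 < C ∧
      ∀ h : ℝ, 0 < h →
      ∀ (p : EuclideanSpace ℝ (Fin 2)) (ηc ξc : EuclideanSpace ℝ (Fin 2) → ℝ) (a b : ℝ),
        a ≤ b →
        (∀ x ∈ sqElem p (h / Real.sqrt 2), ξc x ∈ Set.Icc a b) →
        b - a = Metric.diam (ξc '' sqElem p (h / Real.sqrt 2)) →
        (∀ x ∈ sqElem p (h / Real.sqrt 2), |ηc x| ≤ h) →
        (∀ x ∈ sqElem p (h / Real.sqrt 2),
          DifferentiableAt ℝ ηc x ∧ DifferentiableAt ℝ ξc x) →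
        (∀ x ∈ sqElem p (h / Real.sqrt 2),
          ‖fderiv ℝ ηc x‖ ≤ C₁ ∧ ‖fderiv ℝ ξc x‖ ≤ C₁) →
        Set.InjOn (fun x => (ηc x, ξc x)) (sqElem p (h / Real.sqrt 2)) →
        (∀ x ∈ sqElem p (h / Real.sqrt 2),
          c₀ ≤ |Matrix.det
              !![fderiv ℝ ηc x (EuclideanSpace.single 0 1),
                 fderiv ℝ ηc x (EuclideanSpace.single 1 1);
                 fderiv ℝ ξc x (EuclideanSpace.single 0 1),
                 fderiv ℝ ξc x (EuclideanSpace.single 1 1)]| ∧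
          |Matrix.det
              !![fderiv ℝ ηc x (EuclideanSpace.single 0 1),
                 fderiv ℝ ηc x (EuclideanSpace.single 1 1);
                 fderiv ℝ ξc x (EuclideanSpace.single 0 1),
                 fderiv ℝ ξc x (EuclideanSpace.single 1 1)]| ≤ C₁) →
        c * h ≤ b - a ∧ b - a ≤ C * h := by
  refine ⟨c₀ / 4, C₁, by positivity, hC₁, ?_⟩
  intro h hh p ηc ξc a b hab hξ hdiam hη hdiff hgrad hinj hdet
  set s := h / √2
  have hs : 0 ≤ s := by positivity
  have hs_sq : s ^ 2 = h ^ 2 / 2 := by rw [div_pow, Real.sq_sqrt zero_le_two]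
  have hdist : ∀ x ∈ sqElem p s, ∀ y ∈ sqElem p s, dist x y ≤ h := fun x hx y hy =>
    (dist_le_of_mem_sqElem hs hx hy).trans_eq (mul_div_cancel₀ h (by positivity))
  constructor
  · have harea := ofReal_mul_volume_le_of_pair_mem_Icc measurableSet_sqElem hdiff hinj
      (fun x hx => (hdet x hx).1) (fun x hx => abs_le.1 (hη x hx)) hξ
    rw [volume_sqElem, ← ENNReal.ofReal_pow hs, ← ENNReal.ofReal_mul hc₀.le,
      ← ENNReal.ofReal_mul (by linarith), ENNReal.ofReal_le_ofReal_iff (by nlinarith),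
      hs_sq] at harea
    nlinarith
  · rw [hdiam]
    exact diam_image_le_of_norm_fderiv_le convex_sqElem (fun x hx => (hdiff x hx).2)
      (fun x hx => (hgrad x hx).2) hC₁.le hh.le hdist
end
end

section
/- Let S = [0,h] × Γ̂ with Γ̂ an interval of length ≃ h, and let w ∈ Q^m(S) be a tensor-product polynomial of degree ≤ m in each variable. Then for all nonnegative integers k ≤ m and l, ‖∂_η^k ∂_ξ^l w‖_{L²(S)} ≤ C Σ_{j=k}^{m} h^{j−k−l+1/2} ‖∂_η^j w(0,·)‖_{L²(Γ̂)}, with C independent of h and w, using the Taylor expansion w(η,ξ) = Σ_{j=0}^m (η^j/j!) ∂_η^j w(0,ξ) and the one-dimensional polynomial inverse inequality ‖q'‖_{L²(Γ̂)} ≤ C h^{-1} ‖q‖_{L²(Γ̂)} for q ∈ P^m(Γ̂). -/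
/-! Writing `w(η, ξ) = ∑ᵢ ηⁱ pᵢ(ξ)` (`pᵢ = QEval.row c i`) separates the variables:
`∂_η^k ∂_ξ^l w = ∑ᵢ i(i-1)⋯(i-k+1) η^{i-k} pᵢ^{(l)}(ξ)` and `∂_η^i w(0, ·) = i! pᵢ`.
By Cauchy–Schwarz over the `m + 1` summands, the `L²(S)` norm of such a sum is at most `√(m+1)`
times the sum of the products of the one-variable `L²` norms of the factors. The `η`-factor is at
most `i! h^{i-k+1/2}` and vanishes for `i < k`; the `ξ`-factor is at most
`(K / |Γ̂|)^l ‖pᵢ‖ ≤ (K / c₁)^l h^{-l} ‖pᵢ‖` by the inverse inequality, and vanishes for `l > m`.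

The inverse inequality `‖p'‖ ≤ K ‖p‖` on `[0, 1]` for `deg p ≤ m` holds because both sides are
continuous and absolutely homogeneous in the coefficients of `p`, and the right-hand side is
positive on the unit sphere of the finite-dimensional coefficient space. An affine change of
variables transports it to any interval, with the factor `1 / |Γ̂|`. -/

open MeasureTheory

noncomputable section

open Polynomial

def intervalL2Norm (a b : ℝ) (f : ℝ → ℝ) : ℝ := √(∫ x in a..b, f x ^ 2)

section IntervalL2Norm

variable {a b : ℝ}

theorem intervalL2Norm_nonneg (a b : ℝ) (f : ℝ → ℝ) : 0 ≤ intervalL2Norm a b f :=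
  Real.sqrt_nonneg _

theorem sq_intervalL2Norm (hab : a ≤ b) (f : ℝ → ℝ) :
    intervalL2Norm a b f ^ 2 = ∫ x in a..b, f x ^ 2 :=
  Real.sq_sqrt (intervalIntegral.integral_nonneg hab fun _ _ => sq_nonneg _)

theorem intervalL2Norm_const_mul (c : ℝ) (f : ℝ → ℝ) :
    intervalL2Norm a b (fun x => c * f x) = |c| * intervalL2Norm a b f := by
  simp only [intervalL2Norm, mul_pow, intervalIntegral.integral_const_mul]
  rw [Real.sqrt_mul (sq_nonneg c), Real.sqrt_sq_eq_abs]

theorem intervalL2Norm_eq_sqrt_mul_comp_affine (hab : a < b) (f : ℝ → ℝ) :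
    intervalL2Norm a b f =
      √(b - a) * intervalL2Norm 0 1 (fun s => f (a + (b - a) * s)) := by
  have hδ : b - a ≠ 0 := sub_ne_zero.mpr hab.ne'
  rw [intervalL2Norm, intervalL2Norm, ← Real.sqrt_mul (sub_pos.mpr hab).le,
    intervalIntegral.integral_comp_add_mul (fun x => f x ^ 2) hδ, smul_eq_mul,
    mul_inv_cancel_left₀ hδ]
  simp

theorem intervalL2Norm_pow_le {h : ℝ} (hh : 0 ≤ h) (n : ℕ) :
    intervalL2Norm 0 h (fun x => x ^ n) ≤ h ^ n * √h := by
  rw [intervalL2Norm, ← Real.sqrt_sq (by positivity : 0 ≤ h ^ n * √h)]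
  apply Real.sqrt_le_sqrt
  simp_rw [← pow_mul, integral_pow, mul_pow, Real.sq_sqrt hh, ← pow_mul, ← pow_succ]
  rw [zero_pow (Nat.succ_ne_zero _), sub_zero]
  exact div_le_self (by positivity) (by norm_cast; omega)

theorem intervalL2Norm_eval_pos {p : ℝ[X]} (hp : p ≠ 0) (hab : a < b) :
    0 < intervalL2Norm a b (fun x => p.eval x) := by
  obtain ⟨x, hx, hroot⟩ :=
    ((Set.Ioo_infinite hab).sdiff (p.finite_setOfPred_isRoot hp)).nonempty
  refine Real.sqrt_pos.mpr (intervalIntegral.integral_pos hab (p.continuous.pow 2).continuousOn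
    (fun _ _ => sq_nonneg _) ⟨x, Set.Ioo_subset_Icc_self hx, ?_⟩)
  have : p.eval x ≠ 0 := hroot
  positivity

end IntervalL2Norm

theorem exists_le_mul_of_continuous_of_abs_smul {E : Type*} [NormedAddCommGroup E]
    [NormedSpace ℝ E] [FiniteDimensional ℝ E] {N M : E → ℝ} (hN : Continuous N)
    (hM : Continuous M) (hN_smul : ∀ (t : ℝ) v, N (t • v) = |t| * N v)
    (hM_smul : ∀ (t : ℝ) v, M (t • v) = |t| * M v) (hN_pos : ∀ v, v ≠ 0 → 0 < N v) :
    ∃ K, 0 < K ∧ ∀ v, M v ≤ K * N v := by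
  have hN_sphere (v : E) (hv : v ∈ Metric.sphere (0 : E) 1) : 0 < N v :=
    hN_pos v (ne_zero_of_mem_unit_sphere ⟨v, hv⟩)
  obtain ⟨K, hK⟩ := (isCompact_sphere (0 : E) 1).exists_bound_of_continuousOn
    (hM.continuousOn.div hN.continuousOn fun v hv => (hN_sphere v hv).ne')
  refine ⟨max K 1, by positivity, fun v => ?_⟩
  rcases eq_or_ne v 0 with rfl | hv
  · have hM0 : M 0 = 0 := by simpa using hM_smul 0 0
    have hN0 : N 0 = 0 := by simpa using hN_smul 0 0
    simp [hM0, hN0]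
  set u := ‖v‖⁻¹ • v
  have hu : u ∈ Metric.sphere (0 : E) 1 := by
    simp [u, norm_smul, inv_mul_cancel₀ (norm_ne_zero_iff.mpr hv)]
  have hvu : v = ‖v‖ • u := by
    simp [u, smul_smul, mul_inv_cancel₀ (norm_ne_zero_iff.mpr hv)]
  have hMu : M u ≤ max K 1 * N u := by
    have := (le_abs_self _).trans ((Real.norm_eq_abs _).symm.trans_le (hK u hu))
    rw [Pi.div_apply, div_le_iff₀ (hN_sphere u hu)] at this
    exact this.trans (mul_le_mul_of_nonneg_right (le_max_left _ _) (hN_sphere u hu).le)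
  rw [hvu, hM_smul, hN_smul, abs_norm]
  nlinarith [norm_nonneg v]

theorem continuous_eval_linearMap {n : ℕ} (L : (Fin n → ℝ) →ₗ[ℝ] ℝ[X]) :
    Continuous fun q : (Fin n → ℝ) × ℝ => (L q.1).eval q.2 := by
  have h : ∀ q : (Fin n → ℝ) × ℝ,
      (L q.1).eval q.2 = ∑ i, q.1 i * (L fun j => if i = j then 1 else 0).eval q.2 := by
    intro q
    simp only [← smul_eq_mul, ← eval_smul, ← eval_finsetSum, ← L.pi_apply_eq_sum_univ]
  exact Continuous.congr (by fun_prop) fun q => (h q).symm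

theorem continuous_intervalL2Norm_eval_linearMap {n : ℕ} (L : (Fin n → ℝ) →ₗ[ℝ] ℝ[X])
    (a b : ℝ) : Continuous fun v => intervalL2Norm a b (fun x => (L v).eval x) :=
  Real.continuous_sqrt.comp (intervalIntegral.continuous_parametric_intervalIntegral_of_continuous'
    ((continuous_eval_linearMap L).pow 2) a b)

theorem intervalL2Norm_eval_linearMap_smul {n : ℕ} (L : (Fin n → ℝ) →ₗ[ℝ] ℝ[X])
    (a b t : ℝ) (v : Fin n → ℝ) :
    intervalL2Norm a b (fun x => (L (t • v)).eval x) =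
      |t| * intervalL2Norm a b (fun x => (L v).eval x) := by
  simp_rw [map_smul, eval_smul, smul_eq_mul]
  exact intervalL2Norm_const_mul t _

theorem exists_intervalL2Norm_derivative_le_unitInterval (m : ℕ) :
    ∃ K, 0 < K ∧ ∀ p : ℝ[X], p.natDegree ≤ m →
      intervalL2Norm 0 1 (fun x => (derivative p).eval x) ≤
        K * intervalL2Norm 0 1 (fun x => p.eval x) := by
  let L : (Fin (m + 1) → ℝ) →ₗ[ℝ] ℝ[X] :=
    (degreeLT ℝ (m + 1)).subtype ∘ₗ (degreeLTEquiv ℝ (m + 1)).symm.toLinearMap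
  obtain ⟨K, hK, hle⟩ := exists_le_mul_of_continuous_of_abs_smul
    (continuous_intervalL2Norm_eval_linearMap L 0 1)
    (continuous_intervalL2Norm_eval_linearMap (derivative ∘ₗ L) 0 1)
    (intervalL2Norm_eval_linearMap_smul L 0 1) (intervalL2Norm_eval_linearMap_smul _ 0 1)
    (fun v hv => intervalL2Norm_eval_pos (by simpa [L] using hv) zero_lt_one)
  refine ⟨K, hK, fun p hp => ?_⟩
  have hmem : p ∈ degreeLT ℝ (m + 1) :=
    mem_degreeLT.mpr (degree_le_natDegree.trans_lt (by exact_mod_cast Nat.lt_succ_of_le hp))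
  simpa [L] using hle (degreeLTEquiv ℝ (m + 1) ⟨p, hmem⟩)

section Scaling

variable {m : ℕ} {K a b : ℝ}

theorem intervalL2Norm_derivative_le_of_unitInterval
    (hK : ∀ p : ℝ[X], p.natDegree ≤ m →
      intervalL2Norm 0 1 (fun x => (derivative p).eval x) ≤
        K * intervalL2Norm 0 1 (fun x => p.eval x))
    (hab : a < b) {p : ℝ[X]} (hp : p.natDegree ≤ m) :
    intervalL2Norm a b (fun x => (derivative p).eval x) ≤
      K / (b - a) * intervalL2Norm a b (fun x => p.eval x) := by
  set δ := b - a
  have hδ : 0 < δ := sub_pos.mpr hab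
  set q := p.comp (C a + C δ * X)
  have hq : q.natDegree ≤ m := by
    have hlin : (C a + C δ * X).natDegree ≤ 1 := by rw [add_comm]; exact natDegree_linear_le
    simpa using natDegree_comp_le.trans (Nat.mul_le_mul hp hlin)
  have eval_q : ∀ s, q.eval s = p.eval (a + δ * s) := by simp [q]
  have eval_dq : ∀ s, (derivative q).eval s = δ * (derivative p).eval (a + δ * s) := by
    simp [q, derivative_comp]
  have hdp : intervalL2Norm 0 1 (fun s => (derivative p).eval (a + δ * s)) =
      δ⁻¹ * intervalL2Norm 0 1 (fun s => (derivative q).eval s) := by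
    simp_rw [eval_dq, intervalL2Norm_const_mul, abs_of_pos hδ, inv_mul_cancel_left₀ hδ.ne']
  rw [intervalL2Norm_eq_sqrt_mul_comp_affine hab, intervalL2Norm_eq_sqrt_mul_comp_affine hab,
    hdp]
  calc √δ * (δ⁻¹ * intervalL2Norm 0 1 (fun s => (derivative q).eval s))
      ≤ √δ * (δ⁻¹ * (K * intervalL2Norm 0 1 (fun s => q.eval s))) := by
        gcongr; exact hK q hq
    _ = K / δ * (√δ * intervalL2Norm 0 1 (fun s => p.eval (a + δ * s))) := by
      simp only [eval_q]; ring

theorem intervalL2Norm_iterate_derivative_le_of_unitInterval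
    (hK : ∀ p : ℝ[X], p.natDegree ≤ m →
      intervalL2Norm 0 1 (fun x => (derivative p).eval x) ≤
        K * intervalL2Norm 0 1 (fun x => p.eval x))
    (hK0 : 0 ≤ K) (hab : a < b) (l : ℕ) {p : ℝ[X]} (hp : p.natDegree ≤ m) :
    intervalL2Norm a b (fun x => (derivative^[l] p).eval x) ≤
      (K / (b - a)) ^ l * intervalL2Norm a b (fun x => p.eval x) := by
  induction l generalizing p with
  | zero => simp
  | succ l ih =>
    have hdp : (derivative p).natDegree ≤ m := (natDegree_derivative_le p).trans (by omega)
    rw [Function.iterate_succ_apply, pow_succ, mul_assoc]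
    exact (ih hdp).trans (by gcongr; exact intervalL2Norm_derivative_le_of_unitInterval hK hab hp)

end Scaling

theorem exists_intervalL2Norm_iterate_derivative_le (m : ℕ) :
    ∃ K, 0 < K ∧ ∀ a b : ℝ, a < b → ∀ (l : ℕ) (p : ℝ[X]), p.natDegree ≤ m →
      intervalL2Norm a b (fun x => (derivative^[l] p).eval x) ≤
        (K / (b - a)) ^ l * intervalL2Norm a b (fun x => p.eval x) :=
  let ⟨K, hK0, hK⟩ := exists_intervalL2Norm_derivative_le_unitInterval m
  ⟨K, hK0, fun _ _ hab l _ hp =>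
    intervalL2Norm_iterate_derivative_le_of_unitInterval hK hK0.le hab l hp⟩

theorem sqrt_integral_integral_sum_mul_sq_le {ι : Type*} [Fintype ι] {a b a' b' : ℝ}
    (hab : a ≤ b) (hab' : a' ≤ b') {f g : ι → ℝ → ℝ} (hf : ∀ i, Continuous (f i))
    (hg : ∀ i, Continuous (g i)) :
    √(∫ x in a..b, ∫ y in a'..b', (∑ i, f i x * g i y) ^ 2) ≤
      √(Fintype.card ι) * ∑ i, intervalL2Norm a b (f i) * intervalL2Norm a' b' (g i) := by
  set n : ℝ := (Fintype.card ι : ℝ)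
  have inner (x : ℝ) : ∫ y in a'..b', (∑ i, f i x * g i y) ^ 2 ≤
      n * ∑ i, f i x ^ 2 * intervalL2Norm a' b' (g i) ^ 2 := calc
    _ ≤ ∫ y in a'..b', n * ∑ i, f i x ^ 2 * g i y ^ 2 := by
      refine intervalIntegral.integral_mono_on hab'
        ((by fun_prop : Continuous _).intervalIntegrable _ _)
        ((by fun_prop : Continuous _).intervalIntegrable _ _) fun y _ => ?_
      simpa [n, mul_pow] using
        sq_sum_le_card_mul_sum_sq (s := Finset.univ) (f := fun i => f i x * g i y)
    _ = _ := by
      rw [intervalIntegral.integral_const_mul, intervalIntegral.integral_finsetSum fun i _ =>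
        (by fun_prop : Continuous _).intervalIntegrable _ _]
      simp_rw [intervalIntegral.integral_const_mul, sq_intervalL2Norm hab']
  have outer : ∫ x in a..b, ∫ y in a'..b', (∑ i, f i x * g i y) ^ 2 ≤
      n * ∑ i, (intervalL2Norm a b (f i) * intervalL2Norm a' b' (g i)) ^ 2 := calc
    _ ≤ ∫ x in a..b, n * ∑ i, f i x ^ 2 * intervalL2Norm a' b' (g i) ^ 2 := by
      refine intervalIntegral.integral_mono_on hab ?_
        ((by fun_prop : Continuous _).intervalIntegrable _ _) fun x _ => inner x
      exact (intervalIntegral.continuous_parametric_intervalIntegral_of_continuous'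
        (by fun_prop) a' b').intervalIntegrable _ _
    _ = _ := by
      rw [intervalIntegral.integral_const_mul, intervalIntegral.integral_finsetSum fun i _ =>
        (by fun_prop : Continuous _).intervalIntegrable _ _]
      simp_rw [intervalIntegral.integral_mul_const, mul_pow, sq_intervalL2Norm hab]
  calc √(∫ x in a..b, ∫ y in a'..b', (∑ i, f i x * g i y) ^ 2)
      ≤ √(n * (∑ i, intervalL2Norm a b (f i) * intervalL2Norm a' b' (g i)) ^ 2) := by
        refine Real.sqrt_le_sqrt (outer.trans ?_)
        gcongr
        exact Finset.sum_sq_le_sq_sum_of_nonneg fun i _ =>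
          mul_nonneg (intervalL2Norm_nonneg _ _ _) (intervalL2Norm_nonneg _ _ _)
    _ = _ := by
        rw [Real.sqrt_mul (by positivity), Real.sqrt_sq (Finset.sum_nonneg fun i _ =>
          mul_nonneg (intervalL2Norm_nonneg _ _ _) (intervalL2Norm_nonneg _ _ _))]

theorem Polynomial.iteratedDeriv_eval (n : ℕ) (p : ℝ[X]) :
    iteratedDeriv n (fun x => p.eval x) = fun x => (derivative^[n] p).eval x := by
  induction n with
  | zero => simp
  | succ n ih =>
    funext x
    rw [iteratedDeriv_succ, ih, Polynomial.deriv, Function.iterate_succ_apply']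

namespace QEval

variable {m : ℕ} (c : Fin (m + 1) → Fin (m + 1) → ℝ)

def row (i : Fin (m + 1)) : ℝ[X] := ∑ j : Fin (m + 1), C (c i j) * X ^ (j : ℕ)

theorem natDegree_row_le (i : Fin (m + 1)) : (row c i).natDegree ≤ m :=
  natDegree_sum_le_of_forall_le _ _ fun j _ =>
    (natDegree_C_mul_X_pow_le _ _).trans (Nat.lt_succ_iff.mp j.isLt)

theorem eq_sum_row (η ξ : ℝ) :
    QEval m c η ξ = ∑ i : Fin (m + 1), η ^ (i : ℕ) * (row c i).eval ξ := by
  simp [QEval, row, eval_finsetSum, Finset.mul_sum, mul_assoc, mul_left_comm]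

theorem iteratedDeriv_iteratedDeriv (k l : ℕ) (η ξ : ℝ) :
    iteratedDeriv k (fun t => iteratedDeriv l (fun s => QEval m c t s) ξ) η =
      ∑ i : Fin (m + 1), ((i : ℕ).descFactorial k * η ^ ((i : ℕ) - k)) *
        (derivative^[l] (row c i)).eval ξ := by
  have hrow (i : Fin (m + 1)) (n : ℕ) : ContDiff ℝ n fun s => (row c i).eval s := by
    simpa using (row c i).contDiff_aeval (R := ℝ) (𝕜 := ℝ) n
  simp_rw [eq_sum_row]
  simp (disch := fun_prop) only [iteratedDeriv_fun_sum, iteratedDeriv_const_mul_field,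
    iteratedDeriv_mul_const_field, iteratedDeriv_pow, Polynomial.iteratedDeriv_eval]

theorem iteratedDeriv_zero (i : Fin (m + 1)) (ξ : ℝ) :
    iteratedDeriv i (fun t => QEval m c t ξ) 0 = (i : ℕ).factorial * (row c i).eval ξ := by
  simp_rw [eq_sum_row]
  simp (disch := fun_prop) only [iteratedDeriv_fun_sum, iteratedDeriv_mul_const_field,
    iteratedDeriv_fun_pow_zero]
  simp [Fin.val_inj]

theorem sqrt_integral_iteratedDeriv_zero_sq (a b : ℝ) (i : Fin (m + 1)) :
    √(∫ ξ in a..b, iteratedDeriv i (fun t => QEval m c t ξ) 0 ^ 2) =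
      (i : ℕ).factorial * intervalL2Norm a b (fun ξ => (row c i).eval ξ) := by
  simp_rw [iteratedDeriv_zero]
  have := intervalL2Norm_const_mul (a := a) (b := b) ((i : ℕ).factorial : ℝ)
    (fun ξ => (row c i).eval ξ)
  rwa [abs_of_nonneg (by positivity)] at this

end QEval

theorem intervalL2Norm_mul_intervalL2Norm_iterate_derivative_le {m n k l : ℕ}
    {K c₁ h a b : ℝ}
    (hK : ∀ (l : ℕ) (p : ℝ[X]), p.natDegree ≤ m →
      intervalL2Norm a b (fun x => (derivative^[l] p).eval x) ≤
        (K / (b - a)) ^ l * intervalL2Norm a b (fun x => p.eval x))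
    (hK0 : 0 < K) (hc₁ : 0 < c₁) (hh : 0 < h) (hba : c₁ * h ≤ b - a) {p : ℝ[X]}
    (hp : p.natDegree ≤ m) :
    intervalL2Norm 0 h (fun η => n.descFactorial k * η ^ (n - k)) *
        intervalL2Norm a b (fun ξ => (derivative^[l] p).eval ξ) ≤
      max 1 (K / c₁) ^ m * if k ≤ n then
        h ^ ((n : ℝ) - k - l + 1 / 2) * (n.factorial * intervalL2Norm a b (fun ξ => p.eval ξ))
      else 0 := by
  rcases lt_or_ge n k with hnk | hkn
  · simp [Nat.descFactorial_eq_zero_iff_lt.mpr hnk, hnk.not_ge, intervalL2Norm]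
  rcases lt_or_ge m l with hml | hlm
  · have hzero : derivative^[l] p = 0 := iterate_derivative_eq_zero (hp.trans_lt hml)
    have hnorm : intervalL2Norm a b (fun _ => (0 : ℝ)) = 0 := by simp [intervalL2Norm]
    simp only [hzero, eval_zero, hnorm, mul_zero, if_pos hkn]
    exact mul_nonneg (by positivity)
      (mul_nonneg (by positivity) (mul_nonneg (by positivity) (intervalL2Norm_nonneg _ _ _)))
  have hF : intervalL2Norm 0 h (fun η => n.descFactorial k * η ^ (n - k)) ≤
      n.factorial * (h ^ (n - k) * √h) := by
    rw [intervalL2Norm_const_mul, abs_of_nonneg (Nat.cast_nonneg _)]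
    have hdesc : n.descFactorial k ≤ n.factorial :=
      (Nat.le_mul_of_pos_left _ (Nat.factorial_pos _)).trans_eq
        (Nat.factorial_mul_descFactorial hkn)
    gcongr
    · exact intervalL2Norm_nonneg _ _ _
    · exact intervalL2Norm_pow_le hh.le _
  have hG : intervalL2Norm a b (fun ξ => (derivative^[l] p).eval ξ) ≤
      max 1 (K / c₁) ^ m / h ^ l * intervalL2Norm a b (fun ξ => p.eval ξ) := by
    refine (hK l p hp).trans (mul_le_mul_of_nonneg_right ?_ (intervalL2Norm_nonneg _ _ _))
    calc (K / (b - a)) ^ l ≤ (K / c₁) ^ l / h ^ l := by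
          have : 0 < b - a := by nlinarith
          rw [← div_pow, div_div]; gcongr
      _ ≤ max 1 (K / c₁) ^ m / h ^ l := by
          gcongr
          exact (pow_le_pow_left₀ (by positivity) (le_max_right _ _) l).trans
            (pow_le_pow_right₀ (le_max_left _ _) hlm)
  have hpow : h ^ (n - k) * √h / h ^ l = h ^ ((n : ℝ) - k - l + 1 / 2) := by
    rw [Real.sqrt_eq_rpow, ← Real.rpow_natCast, ← Real.rpow_natCast, ← Real.rpow_add hh,
      ← Real.rpow_sub hh, Nat.cast_sub hkn]
    ring_nf
  rw [if_pos hkn, ← hpow]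
  calc _ ≤ n.factorial * (h ^ (n - k) * √h) *
        (max 1 (K / c₁) ^ m / h ^ l * intervalL2Norm a b (fun ξ => p.eval ξ)) := by
        exact mul_le_mul hF hG (intervalL2Norm_nonneg _ _ _) (by positivity)
    _ = _ := by ring

theorem qm_polynomial_trace_bound_general
    (m : ℕ) (c₁ c₂ : ℝ) (hc₁ : 0 < c₁) :
    ∃ C : ℝ, 0 < C ∧
      ∀ h a b : ℝ, 0 < h → c₁ * h ≤ b - a → b - a ≤ c₂ * h →
      ∀ (c : Fin (m + 1) → Fin (m + 1) → ℝ) (k l : ℕ), k ≤ m →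
        Real.sqrt (∫ η in (0 : ℝ)..h, ∫ ξ in a..b,
            (iteratedDeriv k
              (fun t => iteratedDeriv l (fun s => QEval m c t s) ξ) η) ^ 2) ≤
          C * ∑ j ∈ Finset.Icc k m,
                h ^ ((j : ℝ) - (k : ℝ) - (l : ℝ) + 1 / 2) *
                  Real.sqrt (∫ ξ in a..b,
                    (iteratedDeriv j (fun t => QEval m c t ξ) 0) ^ 2) := by
  obtain ⟨K, hK0, hK⟩ := exists_intervalL2Norm_iterate_derivative_le m
  refine ⟨√((m : ℝ) + 1) * max 1 (K / c₁) ^ m, by positivity, ?_⟩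
  intro h a b hh hba _ c k l _
  have hab : a < b := by nlinarith
  set R : ℕ → ℝ := fun j => h ^ ((j : ℝ) - k - l + 1 / 2) *
    √(∫ ξ in a..b, iteratedDeriv j (fun t => QEval m c t ξ) 0 ^ 2)
  simp_rw [QEval.iteratedDeriv_iteratedDeriv]
  calc _ ≤ √((m : ℝ) + 1) * ∑ i : Fin (m + 1),
        intervalL2Norm 0 h (fun η => (i : ℕ).descFactorial k * η ^ ((i : ℕ) - k)) *
          intervalL2Norm a b (fun ξ => (derivative^[l] (QEval.row c i)).eval ξ) := by
        simpa using sqrt_integral_integral_sum_mul_sq_le hh.le hab.le (fun i => by fun_prop)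
          (fun i => (derivative^[l] (QEval.row c i)).continuous)
    _ ≤ √((m : ℝ) + 1) * ∑ i : Fin (m + 1),
        max 1 (K / c₁) ^ m * if k ≤ (i : ℕ) then R i else 0 := by
        refine mul_le_mul_of_nonneg_left (Finset.sum_le_sum fun i _ => ?_) (by positivity)
        simp only [R, QEval.sqrt_integral_iteratedDeriv_zero_sq]
        exact intervalL2Norm_mul_intervalL2Norm_iterate_derivative_le (hK a b hab) hK0 hc₁ hh
          hba (QEval.natDegree_row_le c i)
    _ = _ := by
        have hIcc : (Finset.range (m + 1)).filter (k ≤ ·) = Finset.Icc k m := by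
          ext j; simp; omega
        rw [← Finset.mul_sum, Fin.sum_univ_eq_sum_range (fun j => if k ≤ j then R j else 0),
          ← Finset.sum_filter, hIcc, mul_assoc]

/-- For `w ∈ Q^m([0,h] × Γ̂)` with `|Γ̂| ≃ h`, the bound
`‖∂_η^k ∂_ξ^l w‖_{L²} ≤ C Σ_{j=k}^m h^{j-k-l+1/2} ‖∂_η^j w(0,·)‖_{L²(Γ̂)}` holds with `C`
independent of `h` and `w`. -/
theorem qm_polynomial_trace_bound
    (m : ℕ) (c₁ c₂ : ℝ) (hc₁ : 0 < c₁) (hc₁₂ : c₁ ≤ c₂) :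
    ∃ C : ℝ, 0 < C ∧
      ∀ h a b : ℝ, 0 < h → c₁ * h ≤ b - a → b - a ≤ c₂ * h →
      ∀ (c : Fin (m + 1) → Fin (m + 1) → ℝ) (k l : ℕ), k ≤ m →
        Real.sqrt (∫ η in (0 : ℝ)..h, ∫ ξ in a..b,
            (iteratedDeriv k
              (fun t => iteratedDeriv l (fun s => QEval m c t s) ξ) η) ^ 2) ≤
          C * ∑ j ∈ Finset.Icc k m,
                h ^ ((j : ℝ) - (k : ℝ) - (l : ℝ) + 1 / 2) *
                  Real.sqrt (∫ ξ in a..b,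
                    (iteratedDeriv j (fun t => QEval m c t ξ) 0) ^ 2) :=
  qm_polynomial_trace_bound_general m c₁ c₂ hc₁
end
end
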